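/- Let f: ℝⁿ → ℝᵏ be smooth with sup_{x∈ℝⁿ} |Df(x)| ≤ C₀ < ∞ whose graph F(x) = (x, f(x)) satisfies the soliton equation H̄(x) + F(x)^⊥ = 0 for all x ∈ ℝⁿ. For λ > 0 set f_λ(x) = λ^{-1} f(λx). Then for every x ∈ ℝⁿ, λ > 0, and α ∈ {1, …, k}: (d/dλ) f_λ^α(x) = λ^{−2} ⟨(∇f^α(λx), −e_α), F(λx)⟩ = −λ^{−2} ⟨(∇f^α(λx), −e_α), H̄(λx)⟩, and consequently |(d/dλ) f_λ(x)| ≤ C λ^{−2} |H̄(λx)| for a constant C depending only on C₀ and k. -/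

import Mathlib

open MeasureTheory Metric Filter Submodule
open scoped Topology RealInnerProductSpace NNReal ENNReal

noncomputable section

/-- `E m` is Euclidean space `ℝ^m`. -/
abbrev E (m : ℕ) := EuclideanSpace ℝ (Fin m)

/-- The pairing `ℝ^n × ℝ^k → ℝ^{n+k}`. -/
def pairE {n k : ℕ} (u : E n) (v : E k) : E (n + k) :=
  WithLp.toLp 2 (fun i : Fin (n + k) => (Fin.addCases (fun a => u a) (fun b => v b) i : ℝ))

/-- The graph map `F(x) = (x, f(x))`. -/
def graphMap {n k : ℕ} (f : E n → E k) (x : E n) : E (n + k) :=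
  pairE x (f x)

/-- The partial derivative `∂_i f (x)`. -/
def pd {n k : ℕ} (f : E n → E k) (x : E n) (i : Fin n) : E k :=
  fderiv ℝ f x (EuclideanSpace.single i 1)

/-- The second partial derivative `∂²_{ij} f (x)`. -/
def pd2 {n k : ℕ} (f : E n → E k) (x : E n) (i j : Fin n) : E k :=
  fderiv ℝ (fun y => fderiv ℝ f y (EuclideanSpace.single j 1)) x (EuclideanSpace.single i 1)

/-- The induced metric `g_{ij}(x) = δ_{ij} + ⟨∂_i f(x), ∂_j f(x)⟩` of the graph of `f`. -/
def gMat {n k : ℕ} (f : E n → E k) (x : E n) : Matrix (Fin n) (Fin n) ℝ :=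
  Matrix.of fun i j => (if i = j then (1:ℝ) else 0) + ⟪pd f x i, pd f x j⟫

/-- The tangent space `T_x` of the graph of `f`, spanned by the `∂_i F(x) = (e_i, ∂_i f(x))`. -/
def tangentSpace {n k : ℕ} (f : E n → E k) (x : E n) : Submodule ℝ (E (n + k)) :=
  Submodule.span ℝ (Set.range fun i : Fin n => pairE (EuclideanSpace.single i 1) (pd f x i))

/-- Orthogonal projection `v^⊤` onto the tangent space of the graph. -/
def tproj {n k : ℕ} (f : E n → E k) (x : E n) (v : E (n + k)) : E (n + k) :=
  (orthogonalProjection (tangentSpace f x) v : E (n + k))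

/-- Orthogonal projection `v^⊥` onto the normal space of the graph. -/
def perp {n k : ℕ} (f : E n → E k) (x : E n) (v : E (n + k)) : E (n + k) :=
  v - tproj f x v

/-- The mean curvature vector `H̄(x) = Σ g^{ij}(x) (0, ∂²_{ij} f(x))^⊥` of the graph of `f`. -/
def meanCurv {n k : ℕ} (f : E n → E k) (x : E n) : E (n + k) :=
  ∑ i : Fin n, ∑ j : Fin n, ((gMat f x)⁻¹ i j) • perp f x (pairE 0 (pd2 f x i j))

/-- The divergence `div_Σ Y (x) = Σ g^{ij}(x) ⟨∂_i Y(x), ∂_j F(x)⟩` of a vector field along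
the graph of `f`. -/
def divSigma {n k : ℕ} (f : E n → E k) (Y : E n → E (n + k)) (x : E n) : ℝ :=
  ∑ i : Fin n, ∑ j : Fin n, ((gMat f x)⁻¹ i j) *
    ⟪fderiv ℝ Y x (EuclideanSpace.single i 1), pairE (EuclideanSpace.single j 1) (pd f x j)⟫

/-- The gradient `∇f^α(x) ∈ ℝⁿ` of the `α`-th component of `f`. -/
def gradComp {n k : ℕ} (f : E n → E k) (x : E n) (α : Fin k) : E n :=
  WithLp.toLp 2 (fun i : Fin n => pd f x i α)

/-- The normal vector `(∇f^α(x), −e_α) ∈ ℝⁿ × ℝᵏ`. -/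
def normalVec {n k : ℕ} (f : E n → E k) (x : E n) (α : Fin k) : E (n + k) :=
  pairE (gradComp f x α) (-(EuclideanSpace.single α 1))

/-! ### Auxiliary lemmas -/

lemma inner_pairE {n k : ℕ} (u u' : E n) (v v' : E k) :
    ⟪pairE u v, pairE u' v'⟫ = ⟪u, u'⟫ + ⟪v, v'⟫ := by
  simp only [PiLp.inner_apply, RCLike.inner_apply, starRingEnd_apply, star_trivial]
  rw [Fin.sum_univ_add]
  simp [pairE]

lemma decompE {n : ℕ} (v : E n) : v = ∑ i, v i • EuclideanSpace.single i (1:ℝ) := by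
  ext j
  rw [WithLp.ofLp_sum, Finset.sum_apply]
  simp [EuclideanSpace.single_apply, Finset.sum_ite_eq']

lemma fderiv_apply_coords {n k : ℕ} (L : E n →L[ℝ] E k) (v : E n) (α : Fin k) :
    L v α = ∑ i, v i * L (EuclideanSpace.single i (1:ℝ)) α := by
  conv_lhs => rw [decompE v]
  rw [map_sum, WithLp.ofLp_sum, Finset.sum_apply]
  simp

lemma norm_sq_E {m : ℕ} (v : E m) : ‖v‖ ^ 2 = ∑ i, (v i) ^ 2 := by
  rw [← real_inner_self_eq_norm_sq]
  rw [real_inner_self_eq_norm_sq]; exact EuclideanSpace.real_norm_sq_eq v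

lemma normalVec_mem_orthogonal {n k : ℕ} (f : E n → E k) (x : E n) (α : Fin k) :
    normalVec f x α ∈ (tangentSpace f x)ᗮ := by
  rw [Submodule.mem_orthogonal]
  intro u hu
  induction hu using Submodule.span_induction with
  | mem u hu =>
    obtain ⟨i, rfl⟩ := hu
    rw [normalVec, inner_pairE]
    simp [EuclideanSpace.inner_single_left, gradComp, inner_neg_right,
      EuclideanSpace.inner_single_right]
  | zero => simp
  | add u v _ _ h1 h2 => rw [inner_add_left, h1, h2]; ring
  | smul c u _ h => rw [inner_smul_left, h]; ring

lemma inner_normal_perp {n k : ℕ} (f : E n → E k) (x : E n) (α : Fin k) (v : E (n + k)) :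
    ⟪normalVec f x α, v⟫ = ⟪normalVec f x α, perp f x v⟫ := by
  rw [perp, inner_sub_right, tproj,
    Submodule.inner_left_of_mem_orthogonal (SetLike.coe_mem _) (normalVec_mem_orthogonal f x α)]
  ring

/-- For a soliton graph with `|Df| ≤ C₀`, the rescalings `f_λ(x) = λ⁻¹ f(λx)`
satisfy, componentwise,
`(d/dλ) f_λ^α(x) = λ^{−2} ⟨(∇f^α(λx), −e_α), F(λx)⟩ = −λ^{−2} ⟨(∇f^α(λx), −e_α), H̄(λx)⟩`,
and `|(d/dλ) f_λ(x)| ≤ C λ^{−2} |H̄(λx)|` for a constant `C` depending only on `C₀` and `k`. -/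
theorem rescaling_derivative {n k : ℕ} (hn : 1 ≤ n) (hk : 1 ≤ k)
    (f : E n → E k) (hf : ContDiff ℝ (⊤ : ℕ∞) f)
    (C₀ : ℝ) (hC₀ : ∀ x, ‖fderiv ℝ f x‖ ≤ C₀)
    (hsol : ∀ x, meanCurv f x + perp f x (graphMap f x) = 0) :
    ∃ C : ℝ, 0 < C ∧ ∀ (x : E n) (lam : ℝ), 0 < lam →
      ∃ d : E k,
        HasDerivAt (fun l : ℝ => l⁻¹ • f (l • x)) d lam ∧
        (∀ α : Fin k,
          d α = (lam ^ 2)⁻¹ * ⟪normalVec f (lam • x) α, graphMap f (lam • x)⟫ ∧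
          d α = -((lam ^ 2)⁻¹ * ⟪normalVec f (lam • x) α, meanCurv f (lam • x)⟫)) ∧
        ‖d‖ ≤ C * (lam ^ 2)⁻¹ * ‖meanCurv f (lam • x)‖ := by
  have hC₀nn : 0 ≤ C₀ := le_trans (norm_nonneg _) (hC₀ 0)
  set B : ℝ := (n : ℝ) * C₀ ^ 2 + 1 with hB
  have hBpos : 0 < B := by positivity
  refine ⟨Real.sqrt ((k : ℝ) * B), Real.sqrt_pos.mpr (by positivity), ?_⟩
  intro x lam hlam
  have hdf := hf.differentiable (by simp)
  set y : E n := lam • x with hy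
  set L : E n →L[ℝ] E k := fderiv ℝ f y with hL
  set d : E k := (lam ^ 2)⁻¹ • (L y - f y) with hd
  -- the derivative
  have h1 : HasDerivAt (fun l : ℝ => l⁻¹) (-(lam ^ 2)⁻¹) lam := hasDerivAt_inv hlam.ne'
  have h2 : HasDerivAt (fun l : ℝ => l • x) x lam := by
    simpa using (hasDerivAt_id lam).smul_const x
  have h3 : HasDerivAt (fun l : ℝ => f (l • x)) (L x) lam :=
    (hdf y).hasFDerivAt.comp_hasDerivAt lam h2
  have h4 := h1.smul h3
  have hdeq : d = lam⁻¹ • L x + (-(lam ^ 2)⁻¹) • f y := by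
    have hLy : L y = lam • L x := by rw [hy]; exact L.map_smul _ _
    have hmul : (lam ^ 2)⁻¹ * lam = lam⁻¹ := by
      field_simp
    rw [hd, smul_sub, hLy, smul_smul, hmul, neg_smul, ← sub_eq_add_neg]
  have hder : HasDerivAt (fun l : ℝ => l⁻¹ • f (l • x)) d lam := by
    rw [hdeq]; exact h4
  -- componentwise value of d
  have hdα : ∀ α : Fin k, d α = (lam ^ 2)⁻¹ * (L y α - f y α) := by
    intro α
    rw [hd]
    simp
  -- the first identity
  have key1 : ∀ α : Fin k,
      d α = (lam ^ 2)⁻¹ * ⟪normalVec f y α, graphMap f y⟫ := by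
    intro α
    rw [hdα α, normalVec, graphMap, inner_pairE]
    congr 1
    have hgrad : ⟪gradComp f y α, y⟫ = L y α := by
      rw [fderiv_apply_coords L y α]
      simp only [PiLp.inner_apply, RCLike.inner_apply, starRingEnd_apply, star_trivial]
      refine Finset.sum_congr rfl fun i _ => ?_
      simp only [gradComp, WithLp.ofLp_toLp]; rw [pd, ← hL, mul_comm]
    rw [hgrad, inner_neg_left, EuclideanSpace.inner_single_left]
    simp [sub_eq_add_neg]
  -- the second identity
  have hperpF : perp f y (graphMap f y) = -meanCurv f y :=
    eq_neg_of_add_eq_zero_right (hsol y)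
  have key2 : ∀ α : Fin k,
      d α = -((lam ^ 2)⁻¹ * ⟪normalVec f y α, meanCurv f y⟫) := by
    intro α
    rw [key1 α, inner_normal_perp, hperpF, inner_neg_right]
    ring
  -- norm bound on the normal vectors
  have hNsq : ∀ α : Fin k, ‖normalVec f y α‖ ^ 2 ≤ B := by
    intro α
    rw [← real_inner_self_eq_norm_sq, normalVec, inner_pairE,
      real_inner_self_eq_norm_sq, real_inner_self_eq_norm_sq, hB]
    have h1 : ‖-(EuclideanSpace.single α (1:ℝ))‖ ^ 2 = 1 := by
      rw [norm_neg, EuclideanSpace.norm_single]; norm_num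
    rw [h1]
    gcongr
    rw [norm_sq_E]
    have hterm : ∀ i : Fin n, (gradComp f y α i) ^ 2 ≤ C₀ ^ 2 := by
      intro i
      have h2 : (gradComp f y α i) ^ 2 ≤ ‖pd f y i‖ ^ 2 := by
        rw [norm_sq_E, gradComp, PiLp.toLp_apply]
        exact Finset.single_le_sum (f := fun β => (pd f y i β) ^ 2)
          (fun β _ => sq_nonneg _) (Finset.mem_univ α)
      refine h2.trans ?_
      have h3 : ‖pd f y i‖ ≤ C₀ := by
        rw [pd]
        calc ‖fderiv ℝ f y (EuclideanSpace.single i 1)‖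
            ≤ ‖fderiv ℝ f y‖ * ‖EuclideanSpace.single i (1:ℝ)‖ :=
              (fderiv ℝ f y).le_opNorm _
          _ ≤ C₀ * 1 := by
              rw [EuclideanSpace.norm_single]; norm_num
              exact hC₀ y
          _ = C₀ := mul_one _
      exact pow_le_pow_left₀ (norm_nonneg _) h3 2
    calc ∑ i, (gradComp f y α i) ^ 2 ≤ ∑ _i : Fin n, C₀ ^ 2 :=
          Finset.sum_le_sum fun i _ => hterm i
      _ = (n : ℝ) * C₀ ^ 2 := by rw [Finset.sum_const]; simp [mul_comm]
  -- norm bound on d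
  set t : ℝ := (lam ^ 2)⁻¹ * ‖meanCurv f y‖ with ht
  have htnn : 0 ≤ t := by positivity
  have habs : ∀ α : Fin k, |d α| ≤ Real.sqrt B * t := by
    intro α
    rw [key2 α, abs_neg, abs_mul, abs_of_nonneg (by positivity : (0:ℝ) ≤ (lam ^ 2)⁻¹)]
    have h0 : |⟪normalVec f y α, meanCurv f y⟫| ≤ Real.sqrt B * ‖meanCurv f y‖ := by
      calc |⟪normalVec f y α, meanCurv f y⟫|
          ≤ ‖normalVec f y α‖ * ‖meanCurv f y‖ := abs_real_inner_le_norm _ _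
        _ ≤ Real.sqrt B * ‖meanCurv f y‖ := by
            gcongr
            rw [← Real.sqrt_sq (norm_nonneg (normalVec f y α))]
            exact Real.sqrt_le_sqrt (hNsq α)
    calc (lam ^ 2)⁻¹ * |⟪normalVec f y α, meanCurv f y⟫|
        ≤ (lam ^ 2)⁻¹ * (Real.sqrt B * ‖meanCurv f y‖) := by
          gcongr
      _ = Real.sqrt B * t := by rw [ht]; ring
  have hnorm : ‖d‖ ≤ Real.sqrt ((k : ℝ) * B) * t := by
    have hsq : ‖d‖ ^ 2 ≤ (k : ℝ) * B * t ^ 2 := by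
      rw [norm_sq_E]
      calc ∑ α, (d α) ^ 2 ≤ ∑ _α : Fin k, B * t ^ 2 := by
            refine Finset.sum_le_sum fun α _ => ?_
            have := pow_le_pow_left₀ (abs_nonneg _) (habs α) 2
            rw [sq_abs, mul_pow, Real.sq_sqrt hBpos.le] at this
            exact this
        _ = (k : ℝ) * B * t ^ 2 := by rw [Finset.sum_const]; simp [mul_assoc]
    have h5 : ‖d‖ = Real.sqrt (‖d‖ ^ 2) := (Real.sqrt_sq (norm_nonneg _)).symm
    rw [h5]
    calc Real.sqrt (‖d‖ ^ 2) ≤ Real.sqrt ((k : ℝ) * B * t ^ 2) := Real.sqrt_le_sqrt hsq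
      _ = Real.sqrt ((k : ℝ) * B) * t := by
          rw [Real.sqrt_mul (by positivity), Real.sqrt_sq htnn]
  exact ⟨d, hder, fun α => ⟨key1 α, key2 α⟩, by rw [mul_assoc]; exact hnorm⟩
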